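/- (Lemma 1.) Let β̂ : Ω → ℝ^p be a random vector such that almost surely β̂ = Σ^{-1/2}β̃̂ where β̃̂ is a global minimizer of the gEN criterion L computed from the random data (y, X). Then ℙ(sign(β̂) = sign(β*)) ≥ ℙ(A_n ∩ B_n), where A_n (resp. B_n) is the event that condition A (resp. condition B) holds. -/

import Mathlib

/-!
In the coordinates `β = Σ^{-1/2} β̃` the gEN criterion becomes
`‖y - Xβ‖² + λ‖β‖₁ + η βᵀΣβ`, which is strictly convex because `Σ` is positive definite.
Primal-dual witness: on `A_n ∩ B_n` the vector `(β₁* + u, 0)`, with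
`u = 𝒞₁₁⁻¹ (W(1)/√n - (η/n) Σ₁₁β₁* - (λ/2n) sign β₁*)`, satisfies the subgradient optimality
conditions. On the support this is the defining equation of `u`; off the support condition B
bounds the gradient by `λ`. So it is the unique minimizer and `β̂` equals it almost surely, while
condition A gives `|u_j| < |(β₁*)_j|`, so it has the signs of `β*`.
-/

open Matrix MeasureTheory ProbabilityTheory

/-- squared Euclidean norm -/
noncomputable def norm2sq {m : ℕ} (v : Fin m → ℝ) : ℝ := ∑ i, (v i) ^ 2

/-- ℓ¹ norm -/
noncomputable def norm1 {m : ℕ} (v : Fin m → ℝ) : ℝ := ∑ i, |v i|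

/-- sign function -/
noncomputable def sgn (x : ℝ) : ℝ := if 0 < x then 1 else if x < 0 then -1 else 0

lemma sgn_of_pos {x : ℝ} (h : 0 < x) : sgn x = 1 := if_pos h

lemma sgn_of_neg {x : ℝ} (h : x < 0) : sgn x = -1 := by
  simp [sgn, h.not_gt, h]

lemma sgn_zero : sgn 0 = 0 := by simp [sgn]

lemma abs_add_sgn_mul_le (a v : ℝ) : |a| + sgn a * v ≤ |a + v| := by
  rcases lt_trichotomy a 0 with h | rfl | h
  · rw [sgn_of_neg h, abs_of_neg h]
    linarith [neg_abs_le (a + v)]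
  · simp [sgn_zero]
  · rw [sgn_of_pos h, abs_of_pos h, one_mul]
    exact le_abs_self _

lemma sgn_add_of_abs_lt {a u : ℝ} (h : |u| < |a|) : sgn (a + u) = sgn a := by
  rcases lt_trichotomy a 0 with ha | rfl | ha
  · rw [abs_of_neg ha] at h
    rw [sgn_of_neg ha, sgn_of_neg (by linarith [le_abs_self u])]
  · exact absurd (h.trans_eq abs_zero) (abs_nonneg u).not_gt
  · rw [abs_of_pos ha] at h
    rw [sgn_of_pos ha, sgn_of_pos (by linarith [neg_abs_le u])]

lemma mul_add_abs_sub_abs_nonneg {lam b g : ℝ} (hlam : 0 ≤ lam)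
    (hg : g = -(lam * sgn b) ∨ (b = 0 ∧ |g| ≤ lam)) (v : ℝ) :
    0 ≤ g * v + lam * (|b + v| - |b|) := by
  rcases hg with rfl | ⟨rfl, hg⟩
  · nlinarith [abs_add_sgn_mul_le b v]
  · rw [zero_add, abs_zero, sub_zero]
    nlinarith [neg_abs_le (g * v), abs_mul g v, abs_nonneg v]

lemma abs_mul_sub_mul_le {a lam D T : ℝ} (ha : 0 < a) (hlam : 0 < lam)
    (h : |D| ≤ lam / a - lam / a * |T|) : |a * D - lam * T| ≤ lam := by
  have hD : a * |D| ≤ lam - lam * |T| := by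
    have h' := mul_le_mul_of_nonneg_left h ha.le
    rwa [mul_sub, ← mul_assoc, mul_div_cancel₀ _ ha.ne'] at h'
  calc |a * D - lam * T| ≤ |a * D| + |lam * T| := abs_sub _ _
    _ = a * |D| + lam * |T| := by rw [abs_mul, abs_mul, abs_of_pos ha, abs_of_pos hlam]
    _ ≤ lam := by linarith

section WeightedElasticNet

variable {m κ : Type*} [Fintype m] [Fintype κ]
  (X : Matrix m κ ℝ) (y : m → ℝ) (Sig : Matrix κ κ ℝ) (lam eta : ℝ)

def weightedElasticNet (b : κ → ℝ) : ℝ :=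
  (y - X *ᵥ b) ⬝ᵥ (y - X *ᵥ b) + lam * ∑ j, |b j| + eta * (b ⬝ᵥ Sig *ᵥ b)

def weightedElasticNetGrad (b : κ → ℝ) : κ → ℝ :=
  (-2 : ℝ) • (Xᵀ *ᵥ (y - X *ᵥ b)) + (2 * eta) • (Sig *ᵥ b)

lemma weightedElasticNet_add (hSig : Sigᵀ = Sig) (b v : κ → ℝ) :
    weightedElasticNet X y Sig lam eta (b + v) =
      weightedElasticNet X y Sig lam eta b
        + (weightedElasticNetGrad X y Sig eta b ⬝ᵥ v + lam * ∑ j, (|b j + v j| - |b j|))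
        + (X *ᵥ v) ⬝ᵥ (X *ᵥ v) + eta * (v ⬝ᵥ Sig *ᵥ v) := by
  have hgrad : weightedElasticNetGrad X y Sig eta b ⬝ᵥ v =
      -2 * ((y - X *ᵥ b) ⬝ᵥ X *ᵥ v) + 2 * eta * (v ⬝ᵥ Sig *ᵥ b) := by
    rw [weightedElasticNetGrad, add_dotProduct, smul_dotProduct, smul_dotProduct,
      dotProduct_comm _ v, dotProduct_mulVec v Xᵀ, vecMul_transpose, dotProduct_comm _ v,
      dotProduct_comm (X *ᵥ v), smul_eq_mul, smul_eq_mul]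
  have hquad : b ⬝ᵥ Sig *ᵥ v = v ⬝ᵥ Sig *ᵥ b := by
    rw [dotProduct_mulVec, ← mulVec_transpose, hSig, dotProduct_comm]
  rw [hgrad]
  simp only [weightedElasticNet, mulVec_add, add_dotProduct, dotProduct_add, sub_dotProduct,
    dotProduct_sub, Pi.add_apply, Finset.sum_sub_distrib, hquad, dotProduct_comm (X *ᵥ v)]
  ring

lemma weightedElasticNet_lt_of_subgradient (hSig : Sig.PosDef) (hlam : 0 ≤ lam) (heta : 0 < eta)
    {b : κ → ℝ} (hg : ∀ j, weightedElasticNetGrad X y Sig eta b j = -(lam * sgn (b j)) ∨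
      (b j = 0 ∧ |weightedElasticNetGrad X y Sig eta b j| ≤ lam))
    {w : κ → ℝ} (hw : w ≠ b) :
    weightedElasticNet X y Sig lam eta b < weightedElasticNet X y Sig lam eta w := by
  obtain ⟨v, hv, rfl⟩ : ∃ v, v ≠ 0 ∧ w = b + v := ⟨w - b, sub_ne_zero.2 hw, by abel⟩
  rw [weightedElasticNet_add X y Sig lam eta hSig.isHermitian b v]
  have hlin :
      0 ≤ weightedElasticNetGrad X y Sig eta b ⬝ᵥ v + lam * ∑ j, (|b j + v j| - |b j|) := by
    rw [dotProduct, Finset.mul_sum, ← Finset.sum_add_distrib]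
    exact Finset.sum_nonneg fun j _ => mul_add_abs_sub_abs_nonneg hlam (hg j) (v j)
  have hX : 0 ≤ (X *ᵥ v) ⬝ᵥ (X *ᵥ v) := Finset.sum_nonneg fun i _ => mul_self_nonneg _
  have hSv : 0 < v ⬝ᵥ Sig *ᵥ v := by simpa using hSig.dotProduct_mulVec_pos hv
  nlinarith

end WeightedElasticNet

lemma mulVec_extend_zero {m κ ι : Type*} [Fintype κ] [Fintype ι] {f : ι → κ}
    (hf : Function.Injective f) (M : Matrix m κ ℝ) (x : ι → ℝ) :
    M *ᵥ Function.extend f x 0 = M.submatrix id f *ᵥ x := by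
  ext i
  refine (Fintype.sum_of_injective f hf _ _ (fun k hk => ?_) fun a => ?_).symm
  · rw [Function.extend_apply' _ _ _ hk, Pi.zero_apply, mul_zero]
  · rw [hf.extend_apply]; rfl

lemma extend_comp_eq_self {ι κ : Type*} {f : ι → κ} (hf : Function.Injective f) {v : κ → ℝ}
    (hv : ∀ j, j ∉ Set.range f → v j = 0) : Function.extend f (v ∘ f) 0 = v := by
  ext j
  by_cases hj : j ∈ Set.range f
  · obtain ⟨i, rfl⟩ := hj
    exact hf.extend_apply _ _ i
  · rw [Function.extend_apply' _ _ _ hj, hv j hj, Pi.zero_apply]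

section Blocks

variable {m κ ι ι' : Type*} [Fintype m] [Fintype ι]
  (N eta : ℝ) (X : Matrix m κ ℝ) (Sig : Matrix κ κ ℝ)

/-- The paper's `W(1)`, `W(2)` are `normalizedScore n X f e` for the two column blocks `f`. -/
noncomputable def normalizedScore (f : ι → κ) (e : m → ℝ) : ι → ℝ :=
  (√N)⁻¹ • (X.submatrix id f)ᵀ *ᵥ e

/-- The paper's `𝒞₁₁`, `𝒞₂₁` are `regularizedGram n η X Σ f f₁` for the two column blocks `f`. -/
noncomputable def regularizedGram (f : ι' → κ) (g : ι → κ) : Matrix ι' ι ℝ :=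
  N⁻¹ • ((X.submatrix id f)ᵀ * X.submatrix id g) + (eta / N) • Sig.submatrix f g

lemma posDef_regularizedGram (hN : 0 < N) (heta : 0 < eta) (hSig : Sig.PosDef) {f : ι → κ}
    (hf : Function.Injective f) : (regularizedGram N eta X Sig f f).PosDef :=
  PosDef.posSemidef_add ((posSemidef_conjTranspose_mul_self _).smul (inv_nonneg.2 hN.le))
    ((hSig.submatrix hf).smul (div_pos heta hN))

lemma weightedElasticNetGrad_comp_extend [Fintype κ] (hN : 0 < N) {f₁ : ι → κ}
    (hf₁ : Function.Injective f₁) (f : ι' → κ) (β₁ u : ι → ℝ) (e : m → ℝ) :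
    weightedElasticNetGrad X (X *ᵥ Function.extend f₁ β₁ 0 + e) Sig eta
        (Function.extend f₁ (β₁ + u) 0) ∘ f =
      -(2 * √N) • normalizedScore N X f e + (2 * N) • (regularizedGram N eta X Sig f f₁ *ᵥ u)
        + (2 * eta) • (Sig.submatrix f f₁ *ᵥ β₁) := by
  have hres : X *ᵥ Function.extend f₁ β₁ 0 + e - X *ᵥ Function.extend f₁ (β₁ + u) 0
      = e - X.submatrix id f₁ *ᵥ u := by
    rw [mulVec_extend_zero hf₁, mulVec_extend_zero hf₁, mulVec_add]; abel
  have hSig_comp : ∀ w, (Sig *ᵥ Function.extend f₁ w 0) ∘ f = Sig.submatrix f f₁ *ᵥ w :=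
    mulVec_extend_zero hf₁ (Sig.submatrix f id)
  have hXt : ∀ r, (Xᵀ *ᵥ r) ∘ f = (X.submatrix id f)ᵀ *ᵥ r := fun r => rfl
  rw [weightedElasticNetGrad, hres, Pi.add_comp, Pi.smul_comp, Pi.smul_comp, hSig_comp, hXt]
  ext i
  simp only [normalizedScore, regularizedGram, mulVec_sub, mulVec_add, add_mulVec, smul_mulVec,
    ← mulVec_mulVec, Pi.add_apply, Pi.sub_apply, Pi.smul_apply, smul_eq_mul]
  field_simp
  ring

end Blocks

section Witness

variable {m κ ι ι' : Type*} [Fintype m] [Fintype ι] [DecidableEq ι]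
  (N lam eta : ℝ) (X : Matrix m κ ℝ) (Sig : Matrix κ κ ℝ) (f₁ : ι → κ) (f₂ : ι' → κ)
  (β₁ : ι → ℝ) (e : m → ℝ)

local notation "𝒞₁₁" => regularizedGram N eta X Sig f₁ f₁
local notation "𝒞₂₁" => regularizedGram N eta X Sig f₂ f₁
local notation "W₁" => normalizedScore N X f₁ e
local notation "s₁" => fun k => sgn (β₁ k)

def ConditionA : Prop :=
  ∀ j, |(𝒞₁₁⁻¹ *ᵥ W₁) j| < √N * (|β₁ j| - lam / (2 * N) * |(𝒞₁₁⁻¹ *ᵥ s₁) j|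
    - eta / N * |(𝒞₁₁⁻¹ *ᵥ (Sig.submatrix f₁ f₁ *ᵥ β₁)) j|)

def ConditionB : Prop :=
  ∀ j, |((𝒞₂₁ * 𝒞₁₁⁻¹) *ᵥ W₁) j - normalizedScore N X f₂ e j| ≤ lam / (2 * √N)
    - lam / (2 * √N) * |((𝒞₂₁ * 𝒞₁₁⁻¹) *ᵥ (s₁ + (2 * eta / lam) • Sig.submatrix f₁ f₁ *ᵥ β₁)
      - (2 * eta / lam) • Sig.submatrix f₂ f₁ *ᵥ β₁) j|

/-- The `u` for which `(β₁ + u, 0)` satisfies the optimality conditions on the support of `β*`. -/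
noncomputable def supportCorrection : ι → ℝ :=
  𝒞₁₁⁻¹ *ᵥ ((√N)⁻¹ • W₁ - (eta / N) • (Sig.submatrix f₁ f₁ *ᵥ β₁) - (lam / (2 * N)) • s₁)

lemma abs_supportCorrection_lt (hN : 0 < N) (hlam : 0 ≤ lam) (heta : 0 ≤ eta)
    (hA : ConditionA N lam eta X Sig f₁ β₁ e) (j : ι) :
    |supportCorrection N lam eta X Sig f₁ β₁ e j| < |β₁ j| := by
  have hsqrt : 0 < √N := Real.sqrt_pos.2 hN
  have hu : supportCorrection N lam eta X Sig f₁ β₁ e j = (√N)⁻¹ * (𝒞₁₁⁻¹ *ᵥ W₁) j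
      - eta / N * (𝒞₁₁⁻¹ *ᵥ (Sig.submatrix f₁ f₁ *ᵥ β₁)) j - lam / (2 * N) * (𝒞₁₁⁻¹ *ᵥ s₁) j := by
    simp only [supportCorrection, mulVec_sub, mulVec_smul, Pi.sub_apply, Pi.smul_apply,
      smul_eq_mul]
  have hW : (√N)⁻¹ * |(𝒞₁₁⁻¹ *ᵥ W₁) j| < |β₁ j| - lam / (2 * N) * |(𝒞₁₁⁻¹ *ᵥ s₁) j|
      - eta / N * |(𝒞₁₁⁻¹ *ᵥ (Sig.submatrix f₁ f₁ *ᵥ β₁)) j| := by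
    rw [inv_mul_lt_iff₀ hsqrt]; exact hA j
  rw [hu]
  refine lt_of_le_of_lt ((abs_sub _ _).trans (add_le_add (abs_sub _ _) le_rfl)) ?_
  rw [abs_mul, abs_mul, abs_mul, abs_of_pos (inv_pos.2 hsqrt),
    abs_of_nonneg (by positivity : 0 ≤ eta / N), abs_of_nonneg (by positivity : 0 ≤ lam / (2 * N))]
  linarith

local notation "b̂" => Function.extend f₁ (β₁ + supportCorrection N lam eta X Sig f₁ β₁ e) 0
local notation "∇" => weightedElasticNetGrad X (X *ᵥ Function.extend f₁ β₁ 0 + e) Sig eta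

lemma weightedElasticNetGrad_witness_comp_support [Fintype κ] (hN : 0 < N)
    (hf₁ : Function.Injective f₁) (hC : IsUnit (𝒞₁₁).det) : ∇ b̂ ∘ f₁ = -lam • s₁ := by
  rw [weightedElasticNetGrad_comp_extend N eta X Sig hN hf₁, supportCorrection, mulVec_mulVec,
    mul_nonsing_inv _ hC, one_mulVec, ← one_div (√N), ← Real.sqrt_div_self']
  ext i
  simp only [Pi.add_apply, Pi.sub_apply, Pi.smul_apply, smul_eq_mul]
  field_simp
  ring

lemma abs_weightedElasticNetGrad_witness_le [Fintype κ] (hN : 0 < N) (hlam : 0 < lam)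
    (hf₁ : Function.Injective f₁) (hB : ConditionB N lam eta X Sig f₁ f₂ β₁ e) (i : ι') :
    |∇ b̂ (f₂ i)| ≤ lam := by
  have hval : ∇ b̂ (f₂ i) = 2 * √N * (((𝒞₂₁ * 𝒞₁₁⁻¹) *ᵥ W₁) i - normalizedScore N X f₂ e i)
      - lam * ((𝒞₂₁ * 𝒞₁₁⁻¹) *ᵥ (s₁ + (2 * eta / lam) • Sig.submatrix f₁ f₁ *ᵥ β₁)
        - (2 * eta / lam) • Sig.submatrix f₂ f₁ *ᵥ β₁) i := by
    rw [← Function.comp_apply (f := ∇ b̂), weightedElasticNetGrad_comp_extend N eta X Sig hN hf₁,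
      supportCorrection, mulVec_mulVec, ← one_div (√N), ← Real.sqrt_div_self']
    simp only [Pi.add_apply, Pi.sub_apply, Pi.smul_apply, smul_eq_mul, mulVec_add, mulVec_sub,
      mulVec_smul]
    field_simp
    ring
  rw [hval]
  exact abs_mul_sub_mul_le (by positivity) hlam (hB i)

theorem sgn_eq_of_forall_weightedElasticNet_le [Fintype κ] (hN : 0 < N) (hlam : 0 < lam)
    (heta : 0 < eta) (hSig : Sig.PosDef) (hf₁ : Function.Injective f₁)
    (hf₂ : ∀ j, j ∉ Set.range f₁ → j ∈ Set.range f₂)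
    (hA : ConditionA N lam eta X Sig f₁ β₁ e) (hB : ConditionB N lam eta X Sig f₁ f₂ β₁ e)
    {b : κ → ℝ} (hb : ∀ w, weightedElasticNet X (X *ᵥ Function.extend f₁ β₁ 0 + e) Sig lam eta b
      ≤ weightedElasticNet X (X *ᵥ Function.extend f₁ β₁ 0 + e) Sig lam eta w) (j : κ) :
    sgn (b j) = sgn (Function.extend f₁ β₁ 0 j) := by
  have hu := abs_supportCorrection_lt N lam eta X Sig f₁ β₁ e hN hlam.le heta.le hA
  have hC : IsUnit (𝒞₁₁).det :=
    (isUnit_iff_isUnit_det _).1 (posDef_regularizedGram N eta X Sig hN heta hSig hf₁).isUnit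
  have hsub : ∀ k, ∇ b̂ k = -(lam * sgn (b̂ k)) ∨ (b̂ k = 0 ∧ |∇ b̂ k| ≤ lam) := by
    intro k
    by_cases hk : k ∈ Set.range f₁
    · obtain ⟨i, rfl⟩ := hk
      left
      rw [hf₁.extend_apply, Pi.add_apply, sgn_add_of_abs_lt (hu i),
        ← Function.comp_apply (f := ∇ b̂),
        weightedElasticNetGrad_witness_comp_support N lam eta X Sig f₁ β₁ e hN hf₁ hC]
      simp
    · obtain ⟨i, rfl⟩ := hf₂ k hk
      exact Or.inr ⟨Function.extend_apply' _ _ _ hk,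
        abs_weightedElasticNetGrad_witness_le N lam eta X Sig f₁ f₂ β₁ e hN hlam hf₁ hB i⟩
  have hb_eq : b = b̂ := by
    by_contra hne
    exact (hb _).not_gt
      (weightedElasticNet_lt_of_subgradient X _ Sig lam eta hSig hlam.le heta hsub hne)
  rw [hb_eq]
  by_cases hj : j ∈ Set.range f₁
  · obtain ⟨i, rfl⟩ := hj
    rw [hf₁.extend_apply, hf₁.extend_apply, Pi.add_apply, sgn_add_of_abs_lt (hu i)]
  · rw [Function.extend_apply' _ _ _ hj, Function.extend_apply' _ _ _ hj]

end Witness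

lemma norm2sq_eq_dotProduct {m : ℕ} (v : Fin m → ℝ) : norm2sq v = v ⬝ᵥ v := by
  simp only [norm2sq, dotProduct, sq]

lemma norm2sq_eq_dotProduct_inv_mulVec {p : ℕ} {R Sig : Matrix (Fin p) (Fin p) ℝ} (hR : Rᵀ = R)
    (hdet : IsUnit R.det) (hRR : R * R = Sig) (b : Fin p → ℝ) :
    norm2sq b = R⁻¹ *ᵥ b ⬝ᵥ Sig *ᵥ R⁻¹ *ᵥ b := by
  have hb : R *ᵥ R⁻¹ *ᵥ b = b := by rw [mulVec_mulVec, mul_nonsing_inv _ hdet, one_mulVec]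
  rw [norm2sq_eq_dotProduct, ← hRR, ← mulVec_mulVec, hb, dotProduct_mulVec, ← mulVec_transpose, hR,
    hb]

lemma gEN_criterion_eq_weightedElasticNet {n p : ℕ} (X : Matrix (Fin n) (Fin p) ℝ)
    (y : Fin n → ℝ) {R Sig : Matrix (Fin p) (Fin p) ℝ} (hR : Rᵀ = R) (hdet : IsUnit R.det)
    (hRR : R * R = Sig)
    (lam eta : ℝ) (bt : Fin p → ℝ) :
    norm2sq (fun i => y i - (X *ᵥ R⁻¹ *ᵥ bt) i) + lam * norm1 (R⁻¹ *ᵥ bt) + eta * norm2sq bt =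
      weightedElasticNet X y Sig lam eta (R⁻¹ *ᵥ bt) := by
  rw [norm2sq_eq_dotProduct_inv_mulVec hR hdet hRR bt, norm2sq_eq_dotProduct]
  rfl

/-- Lemma 1: if almost surely β̂ = Σ^{-1/2}β̃̂ with β̃̂ a global minimizer of the gEN
    criterion, then ℙ(sign(β̂) = sign(β*)) ≥ ℙ(A_n ∩ B_n). -/
theorem stmt8 (n p q : ℕ) (hn : 1 ≤ n) (hqp : q ≤ p)
    (Ω : Type*) [MeasureSpace Ω]
    (lam eta : ℝ) (hlam : 0 < lam) (heta : 0 < eta)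
    (Sig : Matrix (Fin p) (Fin p) ℝ) (hSig : Sig.PosDef)
    -- R is the symmetric positive definite square root Σ^{1/2}, so Σ^{-1/2} = R⁻¹
    (R : Matrix (Fin p) (Fin p) ℝ) (hR : R.PosDef) (hRR : R * R = Sig)
    -- X is a random n×p matrix whose rows are i.i.d. centered Gaussian vectors with
    -- covariance Σ
    (X : Ω → Matrix (Fin n) (Fin p) ℝ)
    -- ε is a centered Gaussian vector with covariance σ²Iₙ
    (eps : Ω → Fin n → ℝ)
    -- the linear model y = Xβ* + ε
    (betastar : Fin p → ℝ)
    (hbeta2 : ∀ j : Fin p, q ≤ (j : ℕ) → betastar j = 0)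
    (y : Ω → Fin n → ℝ) (hy : ∀ ω, y ω = (X ω).mulVec betastar + eps ω)
    -- the gEN criterion computed from the random data (y, X)
    (L : Ω → (Fin p → ℝ) → ℝ)
    (hL : ∀ ω bt, L ω bt =
      norm2sq (fun i => y ω i - (X ω).mulVec (R⁻¹.mulVec bt) i)
        + lam * norm1 (R⁻¹.mulVec bt) + eta * norm2sq bt)
    -- β̂ is a random vector which is a.s. Σ^{-1/2} times a global minimizer of L
    (bhat : Ω → Fin p → ℝ)
    (hbhat : ∀ᵐ ω ∂(ℙ : Measure Ω), ∃ bt : Fin p → ℝ,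
      (∀ b : Fin p → ℝ, L ω bt ≤ L ω b) ∧ bhat ω = R⁻¹.mulVec bt)
    -- blocks and derived quantities
    (X1 : Ω → Matrix (Fin n) (Fin q) ℝ)
    (hX1 : ∀ ω, X1 ω = (X ω).submatrix id (Fin.castLE hqp))
    (X2 : Ω → Matrix (Fin n) (Fin (p - q)) ℝ)
    (hX2 : ∀ ω, X2 ω = (X ω).submatrix id
      (fun j => Fin.cast (by omega : q + (p - q) = p) (Fin.natAdd q j)))
    (Sig11 : Matrix (Fin q) (Fin q) ℝ)
    (hSig11 : Sig11 = Sig.submatrix (Fin.castLE hqp) (Fin.castLE hqp))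
    (Sig21 : Matrix (Fin (p - q)) (Fin q) ℝ)
    (hSig21 : Sig21 = Sig.submatrix
      (fun j => Fin.cast (by omega : q + (p - q) = p) (Fin.natAdd q j)) (Fin.castLE hqp))
    (beta1 : Fin q → ℝ) (hbeta1q : beta1 = fun j => betastar (Fin.castLE hqp j))
    (C11 : Ω → Matrix (Fin q) (Fin q) ℝ)
    (hC11 : ∀ ω, C11 ω = ((n : ℝ)⁻¹) • ((X1 ω)ᵀ * X1 ω))
    (C21 : Ω → Matrix (Fin (p - q)) (Fin q) ℝ)
    (hC21 : ∀ ω, C21 ω = ((n : ℝ)⁻¹) • ((X2 ω)ᵀ * X1 ω))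
    (W1 : Ω → Fin q → ℝ) (hW1 : ∀ ω, W1 ω = ((Real.sqrt n)⁻¹) • (X1 ω)ᵀ.mulVec (eps ω))
    (W2 : Ω → Fin (p - q) → ℝ)
    (hW2 : ∀ ω, W2 ω = ((Real.sqrt n)⁻¹) • (X2 ω)ᵀ.mulVec (eps ω))
    (CC11 : Ω → Matrix (Fin q) (Fin q) ℝ)
    (hCC11 : ∀ ω, CC11 ω = C11 ω + (eta / n) • Sig11)
    (CC21 : Ω → Matrix (Fin (p - q)) (Fin q) ℝ)
    (hCC21 : ∀ ω, CC21 ω = C21 ω + (eta / n) • Sig21)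
    -- the events A_n and B_n
    (An : Set Ω)
    (hAn : An = {ω | ∀ j : Fin q,
      |(CC11 ω)⁻¹.mulVec (W1 ω) j| < Real.sqrt n *
        (|beta1 j| - (lam / (2 * n)) * |((CC11 ω)⁻¹.mulVec fun k => sgn (beta1 k)) j|
          - (eta / n) * |(CC11 ω)⁻¹.mulVec (Sig11.mulVec beta1) j|)})
    (Bn : Set Ω)
    (hBn : Bn = {ω | ∀ j : Fin (p - q),
      |(CC21 ω * (CC11 ω)⁻¹).mulVec (W1 ω) j - W2 ω j| ≤ lam / (2 * Real.sqrt n)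
        - (lam / (2 * Real.sqrt n)) *
          |((CC21 ω * (CC11 ω)⁻¹).mulVec
              ((fun k => sgn (beta1 k)) + (2 * eta / lam) • Sig11.mulVec beta1)
            - (2 * eta / lam) • Sig21.mulVec beta1) j|}) :
    ℙ (An ∩ Bn) ≤ ℙ {ω | ∀ j : Fin p, sgn (bhat ω j) = sgn (betastar j)} := by
  set f₁ : Fin q → Fin p := Fin.castLE hqp
  set f₂ : Fin (p - q) → Fin p := fun j => Fin.cast (by omega) (Fin.natAdd q j)
  have hf₁ : Function.Injective f₁ := Fin.castLE_injective hqp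
  have hf₂ : ∀ j, j ∉ Set.range f₁ → j ∈ Set.range f₂ := fun j hj => by
    replace hj : q ≤ (j : ℕ) := not_lt.1 (by rwa [Fin.range_castLE] at hj)
    exact ⟨⟨j - q, by omega⟩, Fin.ext <| by simp [f₂]; omega⟩
  have hdet : IsUnit R.det := (isUnit_iff_isUnit_det R).1 hR.isUnit
  have hsurj : Function.Surjective R⁻¹.mulVec :=
    mulVec_surjective_iff_isUnit.2 (isUnit_nonsing_inv_iff.2 hR.isUnit)
  obtain rfl := funext hCC11; obtain rfl := funext hCC21
  obtain rfl := funext hC11; obtain rfl := funext hC21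
  obtain rfl := funext hW1; obtain rfl := funext hW2
  obtain rfl := funext hX1; obtain rfl := funext hX2
  subst hAn hBn hSig11 hSig21 hbeta1q
  have hbetastar : Function.extend f₁ (betastar ∘ f₁) 0 = betastar :=
    extend_comp_eq_self hf₁ fun j hj => hbeta2 j (not_lt.1 (by rwa [Fin.range_castLE] at hj))
  refine measure_mono_ae (hbhat.mono fun ω ⟨bt, hmin, hbt⟩ ⟨hA, hB⟩ j => ?_)
  have hF : ∀ b, L ω b = weightedElasticNet (X ω) (y ω) Sig lam eta (R⁻¹ *ᵥ b) := fun b =>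
    (hL ω b).trans (gEN_criterion_eq_weightedElasticNet _ _ hR.isHermitian hdet hRR lam eta b)
  rw [hy ω, ← hbetastar] at hF
  rw [hbt, ← hbetastar]
  exact sgn_eq_of_forall_weightedElasticNet_le _ _ _ (X ω) Sig f₁ f₂ (betastar ∘ f₁) (eps ω)
    (Nat.cast_pos.2 hn) hlam heta hSig hf₁ hf₂ hA hB (hsurj.forall.2 fun b => by simpa only [hF] using hmin b) j
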